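/- arXiv:1802.03092 — 9 statements merged into one kernel-verified Lean document; each statement's English description precedes it below -/
import Mathlib

section
/- Let d ≥ 2 and let G be a finite simple graph with maximum degree at most d − 1. Then G is realizable on the sphere 𝕊^{d−1} of radius 1/√2 in ℝ^d. -/
/-- A graph `G` is realizable on the sphere `𝕊^{d-1}` of radius `1/√2` in `ℝ^d` if there is an
injective map from its vertices to `EuclideanSpace ℝ (Fin d)` with all images of norm `1/√2`,
sending adjacent vertices to points at distance `1`. -/
def SphereRealizable {V : Type*} (G : SimpleGraph V) (d : ℕ) : Prop :=
  ∃ f : V → EuclideanSpace ℝ (Fin d), Function.Injective f ∧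
    (∀ v : V, ‖f v‖ = 1 / Real.sqrt 2) ∧
    ∀ u v : V, G.Adj u v → dist (f u) (f v) = 1

/-!
Scaling by `1/√2`, it suffices to send the vertices injectively to unit vectors of `ℝ^d` so that
adjacent vertices go to orthogonal vectors. Fix a root `w` of a connected component and place the
other vertices of the component in an order in which each has at most `d - 2` previously placed
neighbours. Such an order is built from the end: remove the root, then repeatedly a vertex with at
most `d - 2` neighbours among the remaining ones. One exists as long as every remaining vertex is
joined inside the remaining set to such a vertex, and this invariant survives a removal because the
vertex preceding the removed one on a path loses a neighbour. A vertex with at most `d - 2` placed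
neighbours may be put anywhere on a sphere of dimension at least one, so it avoids all placed
vectors and their negatives. The root may have `d - 1` independent placed neighbours, leaving only
`±u`; as the placed vectors contain no antipodal pair, one of them is free. Finally a reflection
moves each component off the vectors used by the others.
-/

open Module Submodule

open scoped RealInnerProductSpace

theorem ne_neg_self_of_ne_zero {M : Type*} [AddCommGroup M] [Module ℝ M] {x : M} (hx : x ≠ 0) :
    x ≠ -x := by
  intro h
  have h2x : (2 : ℝ) • x = 0 := by
    rw [two_smul]; nth_rewrite 2 [h]; exact add_neg_cancel x
  simp [hx] at h2x

theorem Set.disjoint_neg_insert {M : Type*} [InvolutiveNeg M] {S : Set M} {x : M}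
    (hS : Disjoint S (-S)) (hx : x ≠ -x) (hxS : -x ∉ S) :
    Disjoint (insert x S) (-insert x S) := by
  rw [Set.neg_insert, Set.disjoint_insert_left, Set.disjoint_insert_right, Set.mem_insert_iff,
    Set.mem_neg]
  exact ⟨by tauto, hxS, hS⟩

section InnerProductSpace

variable {E : Type*} [NormedAddCommGroup E] [InnerProductSpace ℝ E]

theorem exists_linearIsometryEquiv_disjoint_image (hE : 2 ≤ finrank ℝ E) {X Y : Set E}
    (hX : X.Finite) (hY : Y.Finite) (hX0 : 0 ∉ X) :
    ∃ Q : E ≃ₗᵢ[ℝ] E, Disjoint (Q '' X) Y := by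
  have := hX.to_subtype
  have := hY.to_subtype
  let p : X ⊕ (X × Y) → Submodule ℝ E
    | .inl x => (ℝ ∙ (x : E))ᗮ
    | .inr xy => ℝ ∙ ((xy.1 : E) - xy.2)
  have hp : ∀ i, p i ≠ ⊤ := by
    rintro (⟨x, hx⟩ | ⟨x, y⟩) h
    · rw [orthogonal_eq_top_iff, span_singleton_eq_bot] at h
      exact hX0 (h ▸ hx)
    · have : finrank ℝ (ℝ ∙ ((x : E) - y)) ≤ 1 := by
        have := finrank_span_finset_le_card (R := ℝ) {(x : E) - y}
        rwa [Finset.coe_singleton, Finset.card_singleton] at this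
      change ℝ ∙ ((x : E) - y) = ⊤ at h
      rw [h, finrank_top] at this
      omega
  obtain ⟨v, hv⟩ := exists_forall_notMem_of_forall_ne_top p hp
  -- reflecting in `vᗮ` moves `x` by a nonzero multiple of `v`, unless `x ⊥ v`
  refine ⟨reflection (ℝ ∙ v)ᗮ, Set.disjoint_left.2 ?_⟩
  rintro _ ⟨x, hx, rfl⟩ hy
  have hxv : ⟪v, x⟫ ≠ 0 := fun h =>
    hv (.inl ⟨x, hx⟩) (mem_orthogonal_singleton_iff_inner_left.2 h)
  have hv0 : v ≠ 0 := by rintro rfl; simp at hxv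
  set c : ℝ := 2 * (⟪v, x⟫ / ‖v‖ ^ 2)
  have hc : c ≠ 0 := by positivity
  have hQx : x - reflection (ℝ ∙ v)ᗮ x = c • v := by
    rw [reflection_orthogonal_apply, Submodule.reflection_apply, starProjection_singleton]
    simp only [c, RCLike.ofReal_real_eq_id, id]
    module
  apply hv (.inr (⟨x, hx⟩, ⟨_, hy⟩))
  exact mem_span_singleton.2 ⟨c⁻¹, by rw [hQx, inv_smul_smul₀ hc]⟩

variable [FiniteDimensional ℝ E]

theorem finrank_le_finrank_orthogonal_span_add_card (T : Finset E) :
    finrank ℝ E ≤ finrank ℝ (span ℝ (T : Set E))ᗮ + T.card := by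
  have := (span ℝ (T : Set E)).finrank_add_finrank_orthogonal
  have : finrank ℝ (span ℝ (T : Set E)) ≤ T.card := finrank_span_finset_le_card T
  omega

theorem exists_norm_eq_one_orthogonal_notMem (T : Finset E) (hT : T.card + 2 ≤ finrank ℝ E)
    {B : Set E} (hB : B.Finite) : ∃ x : E, ‖x‖ = 1 ∧ (∀ y ∈ T, ⟪y, x⟫ = 0) ∧ x ∉ B := by
  have hK := finrank_le_finrank_orthogonal_span_add_card T
  set K := (span ℝ (T : Set E))ᗮ
  have : Nontrivial K := Module.nontrivial_of_finrank_pos (R := ℝ) (by omega)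
  obtain ⟨w, hw⟩ := (NormedSpace.sphere_nonempty (x := (0 : K)) (r := 1)).2 zero_le_one
  have hinf : (Metric.sphere (0 : K) 1).Infinite := by
    refine (isConnected_sphere ?_ 0 zero_le_one).isPreconnected.infinite_of_nontrivial
      ⟨w, hw, -w, by simpa using hw, ne_neg_self_of_ne_zero (ne_zero_of_mem_unit_sphere ⟨w, hw⟩)⟩
    rw [← finrank_eq_rank]
    exact_mod_cast (by omega : 1 < finrank ℝ K)
  obtain ⟨_, ⟨x, hx, rfl⟩, hxB⟩ :=
    ((hinf.image Subtype.val_injective.injOn).sdiff hB).nonempty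
  exact ⟨x, by simpa using hx, fun y hy => inner_right_of_mem_orthogonal (subset_span hy) x.2, hxB⟩

theorem exists_norm_eq_one_orthogonal_notMem_of_disjoint_neg (T : Finset E)
    (hT : T.card < finrank ℝ E) {S : Set E} (hS : Disjoint S (-S)) :
    ∃ x : E, ‖x‖ = 1 ∧ (∀ y ∈ T, ⟪y, x⟫ = 0) ∧ x ∉ S := by
  have hK := finrank_le_finrank_orthogonal_span_add_card T
  set K := (span ℝ (T : Set E))ᗮ
  have : Nontrivial K := Module.nontrivial_of_finrank_pos (R := ℝ) (by omega)
  obtain ⟨w, hw⟩ := (NormedSpace.sphere_nonempty (x := (0 : K)) (r := 1)).2 zero_le_one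
  have horth (x : K) : ∀ y ∈ T, ⟪y, (x : E)⟫ = 0 := fun y hy =>
    inner_right_of_mem_orthogonal (subset_span hy) x.2
  by_cases hwS : (w : E) ∈ S
  · refine ⟨-w, by simpa using hw, horth (-w), fun h => hS.ne_of_mem hwS ?_ rfl⟩
    simpa using h
  · exact ⟨w, by simpa using hw, horth w, hwS⟩

end InnerProductSpace

namespace SimpleGraph

open Finset

variable {V : Type*}

def ReachIn (G : SimpleGraph V) (s : Finset V) : V → V → Prop :=
  Relation.ReflTransGen fun a b => G.Adj a b ∧ a ∈ s ∧ b ∈ s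

open Classical in
theorem ReachIn.filter {G : SimpleGraph V} {s : Finset V} {v w : V} (h : G.ReachIn s v w) :
    G.ReachIn {u ∈ s | G.ReachIn s u w} v w := by
  induction h using Relation.ReflTransGen.head_induction_on with
  | refl => exact .refl
  | head hva hrest ih =>
    obtain ⟨hadj, hv, ha⟩ := hva
    exact .head ⟨hadj, mem_filter.2 ⟨hv, .head ⟨hadj, hv, ha⟩ hrest⟩, mem_filter.2 ⟨ha, hrest⟩⟩ ih

section Deficient

variable (G : SimpleGraph V) [DecidableRel G.Adj]

def degreeIn (s : Finset V) (z : V) : ℕ := #{b ∈ s | G.Adj z b}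

def ReachesDeficient (d : ℕ) (s : Finset V) : Prop :=
  ∀ w ∈ s, ∃ z ∈ s, G.ReachIn s w z ∧ G.degreeIn s z + 2 ≤ d

variable {G}

theorem degreeIn_le_degree [Fintype V] (s : Finset V) (z : V) : G.degreeIn s z ≤ G.degree z := by
  rw [← card_neighborFinset_eq_degree]
  exact card_le_card fun b hb => (G.mem_neighborFinset z b).2 (mem_filter.1 hb).2

theorem degreeIn_mono {s t : Finset V} (hst : s ⊆ t) (z : V) : G.degreeIn s z ≤ G.degreeIn t z :=
  card_le_card (filter_subset_filter _ hst)

theorem degreeIn_erase_lt [DecidableEq V] {s : Finset V} {a z : V} (hz : z ∈ s) (ha : G.Adj a z) :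
    G.degreeIn (s.erase z) a < G.degreeIn s a := by
  rw [degreeIn, degreeIn, filter_erase]
  exact card_erase_lt_of_mem (mem_filter.2 ⟨hz, ha⟩)

variable [Fintype V] [DecidableEq V] {d : ℕ}

/-- Follow the path from `w` to `z₀`: if it passes through `z`, the vertex just before `z` lost
the neighbour `z`, so it is deficient in `s.erase z`. -/
theorem ReachIn.exists_deficient_erase (hdeg : ∀ v, G.degree v < d) {s : Finset V} {z z₀ w : V}
    (h : G.ReachIn s w z₀) (hw : w ∈ s.erase z)
    (hz₀ : z₀ ∈ s.erase z → G.degreeIn s z₀ + 2 ≤ d) :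
    ∃ z' ∈ s.erase z, G.ReachIn (s.erase z) w z' ∧ G.degreeIn (s.erase z) z' + 2 ≤ d := by
  induction h using Relation.ReflTransGen.head_induction_on with
  | refl =>
    have := degreeIn_mono (G := G) (erase_subset z s) z₀
    exact ⟨z₀, hw, .refl, by have := hz₀ hw; omega⟩
  | @head a c hac _ ih =>
    obtain ⟨hadj, -, hcs⟩ := hac
    by_cases hcz : c = z
    · subst hcz
      have := degreeIn_erase_lt hcs hadj
      have := degreeIn_le_degree (G := G) s a
      exact ⟨a, hw, .refl, by have := hdeg a; omega⟩
    · have hc : c ∈ s.erase z := mem_erase.2 ⟨hcz, hcs⟩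
      obtain ⟨z', hz', hreach, hdef⟩ := ih hc
      exact ⟨z', hz', .head ⟨hadj, hw, hc⟩ hreach, hdef⟩

theorem ReachesDeficient.erase (hdeg : ∀ v, G.degree v < d) {s : Finset V}
    (hs : G.ReachesDeficient d s) (z : V) : G.ReachesDeficient d (s.erase z) := fun w hw =>
  let ⟨_, _, hreach, hdef⟩ := hs w (mem_of_mem_erase hw)
  hreach.exists_deficient_erase hdeg hw fun _ => hdef

theorem reachesDeficient_erase_of_forall_reachIn (hdeg : ∀ v, G.degree v < d) {c : Finset V}
    {w : V} (hc : ∀ v ∈ c, G.ReachIn c v w) : G.ReachesDeficient d (c.erase w) := fun v hv =>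
  (hc v (mem_of_mem_erase hv)).exists_deficient_erase hdeg hv fun h => (notMem_erase w c h).elim

end Deficient

section OrthRep

variable (G : SimpleGraph V) {E F : Type*} [NormedAddCommGroup E] [InnerProductSpace ℝ E]
  [NormedAddCommGroup F] [InnerProductSpace ℝ F]

structure IsOrthRep (s : Finset V) (f : V → E) : Prop where
  norm_eq_one : ∀ v ∈ s, ‖f v‖ = 1
  inner_eq_zero : ∀ u ∈ s, ∀ v ∈ s, G.Adj u v → ⟪f u, f v⟫ = 0
  injOn : Set.InjOn f s

theorem isOrthRep_empty (f : V → E) : G.IsOrthRep ∅ f := ⟨by simp, by simp, by simp⟩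

variable {G} {s t : Finset V} {f g : V → E}

theorem IsOrthRep.comp_linearIsometry (hf : G.IsOrthRep s f) (Q : E →ₗᵢ[ℝ] F) :
    G.IsOrthRep s (Q ∘ f) where
  norm_eq_one v hv := by simpa using hf.norm_eq_one v hv
  inner_eq_zero u hu v hv huv := by simpa using hf.inner_eq_zero u hu v hv huv
  injOn := Q.injective.comp_injOn hf.injOn

theorem IsOrthRep.piecewise [DecidableEq V] (hf : G.IsOrthRep s f) (hg : G.IsOrthRep t g)
    (hst : Disjoint s t) (hadj : ∀ u ∈ s, ∀ v ∈ t, ¬G.Adj u v)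
    (himg : Disjoint (f '' s) (g '' t)) : G.IsOrthRep (s ∪ t) (t.piecewise g f) := by
  have hs : Set.EqOn (t.piecewise g f) f s := fun v hv =>
    piecewise_eq_of_notMem _ _ _ (Finset.disjoint_left.1 hst hv)
  have ht : Set.EqOn (t.piecewise g f) g t := fun v hv => piecewise_eq_of_mem _ _ _ hv
  refine ⟨fun v hv => ?_, fun u hu v hv huv => ?_, ?_⟩
  · rcases mem_union.1 hv with hv | hv
    · rw [hs hv]; exact hf.norm_eq_one v hv
    · rw [ht hv]; exact hg.norm_eq_one v hv
  · rcases mem_union.1 hu with hu | hu <;> rcases mem_union.1 hv with hv | hv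
    · rw [hs hu, hs hv]; exact hf.inner_eq_zero u hu v hv huv
    · exact (hadj u hu v hv huv).elim
    · exact (hadj v hv u hu huv.symm).elim
    · rw [ht hu, ht hv]; exact hg.inner_eq_zero u hu v hv huv
  · rw [coe_union, Set.injOn_union (disjoint_coe.2 hst)]
    refine ⟨hf.injOn.congr hs.symm, hg.injOn.congr ht.symm, fun u hu v hv => ?_⟩
    rw [hs hu, ht hv]
    exact Set.disjoint_iff_forall_ne.1 himg (Set.mem_image_of_mem f hu) (Set.mem_image_of_mem g hv)

theorem IsOrthRep.update [DecidableEq V] {z : V} {x : E} (hf : G.IsOrthRep s f) (hz : z ∉ s)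
    (hx : ‖x‖ = 1) (horth : ∀ u ∈ s, G.Adj z u → ⟪f u, x⟫ = 0) (hxs : x ∉ f '' s) :
    G.IsOrthRep (insert z s) (Function.update f z x) := by
  have hs : Set.EqOn (Function.update f z x) f s := fun u hu =>
    Function.update_of_ne (ne_of_mem_of_not_mem hu hz) x f
  refine ⟨fun v hv => ?_, fun u hu v hv huv => ?_, ?_⟩
  · rcases mem_insert.1 hv with rfl | hv
    · rwa [Function.update_self]
    · rw [hs hv]; exact hf.norm_eq_one v hv
  · rcases mem_insert.1 hu with rfl | hu' <;> rcases mem_insert.1 hv with rfl | hv'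
    · exact (G.irrefl huv).elim
    · rw [Function.update_self, hs hv', real_inner_comm]; exact horth v hv' huv
    · rw [Function.update_self, hs hu']; exact horth u hu' huv.symm
    · rw [hs hu', hs hv']; exact hf.inner_eq_zero u hu' v hv' huv
  · rw [coe_insert, Set.injOn_insert (mod_cast hz), Function.update_self, hs.image_eq]
    exact ⟨hf.injOn.congr hs.symm, hxs⟩

section Extension

variable [DecidableRel G.Adj] [FiniteDimensional ℝ E] {z : V}

theorem IsOrthRep.exists_insert_disjoint_neg [DecidableEq V] (hf : G.IsOrthRep s f)
    (hanti : Disjoint (f '' s) (-(f '' s))) (hz : z ∉ s)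
    (hdef : G.degreeIn s z + 2 ≤ finrank ℝ E) :
    ∃ f' : V → E, G.IsOrthRep (insert z s) f' ∧
      Disjoint (f' '' ↑(insert z s)) (-(f' '' ↑(insert z s))) := by
  classical
  have hfin : (f '' s).Finite := s.finite_toSet.image f
  obtain ⟨x, hx, horth, hxB⟩ := exists_norm_eq_one_orthogonal_notMem
    ({u ∈ s | G.Adj z u}.image f) ((add_le_add_left card_image_le 2).trans hdef)
    (hfin.union hfin.neg)
  rw [Set.mem_union, Set.mem_neg, not_or] at hxB
  refine ⟨_, hf.update hz hx (fun u hu huz => horth _ (mem_image_of_mem f (mem_filter.2 ⟨hu, huz⟩)))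
    hxB.1, ?_⟩
  have hs : Set.EqOn (Function.update f z x) f s := fun u hu =>
    Function.update_of_ne (ne_of_mem_of_not_mem hu hz) x f
  rw [coe_insert, Set.image_insert_eq, Function.update_self, hs.image_eq]
  exact Set.disjoint_neg_insert hanti (ne_neg_self_of_ne_zero (norm_ne_zero_iff.1 (by simp [hx])))
    hxB.2

theorem IsOrthRep.exists_insert [DecidableEq V] (hf : G.IsOrthRep s f)
    (hanti : Disjoint (f '' s) (-(f '' s))) (hz : z ∉ s) (hdeg : G.degreeIn s z < finrank ℝ E) :
    ∃ f' : V → E, G.IsOrthRep (insert z s) f' := by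
  classical
  obtain ⟨x, hx, horth, hxs⟩ := exists_norm_eq_one_orthogonal_notMem_of_disjoint_neg
    ({u ∈ s | G.Adj z u}.image f) (card_image_le.trans_lt hdeg) hanti
  exact ⟨_, hf.update hz hx
    (fun u hu huz => horth _ (mem_image_of_mem f (mem_filter.2 ⟨hu, huz⟩))) hxs⟩

variable [Fintype V]

theorem exists_isOrthRep_disjoint_neg_of_reachesDeficient
    (hdeg : ∀ v, G.degree v < finrank ℝ E) (s : Finset V)
    (hs : G.ReachesDeficient (finrank ℝ E) s) :
    ∃ f : V → E, G.IsOrthRep s f ∧ Disjoint (f '' s) (-(f '' s)) := by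
  classical
  induction s using Finset.strongInduction with
  | H s ih =>
  obtain rfl | ⟨w, hw⟩ := s.eq_empty_or_nonempty
  · exact ⟨0, G.isOrthRep_empty 0, by simp⟩
  obtain ⟨z, hz, -, hdef⟩ := hs w hw
  obtain ⟨f, hf, hanti⟩ := ih (s.erase z) (erase_ssubset hz) (hs.erase hdeg z)
  rw [← insert_erase hz]
  have := degreeIn_mono (G := G) (erase_subset z s) z
  exact hf.exists_insert_disjoint_neg hanti (notMem_erase z s) (by omega)

theorem exists_isOrthRep_of_forall_reachIn (hdeg : ∀ v, G.degree v < finrank ℝ E) {c : Finset V}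
    {w : V} (hw : w ∈ c) (hc : ∀ v ∈ c, G.ReachIn c v w) : ∃ f : V → E, G.IsOrthRep c f := by
  classical
  obtain ⟨f, hf, hanti⟩ := exists_isOrthRep_disjoint_neg_of_reachesDeficient hdeg (c.erase w)
    (reachesDeficient_erase_of_forall_reachIn hdeg hc)
  rw [← insert_erase hw]
  exact hf.exists_insert hanti (notMem_erase w c) ((degreeIn_le_degree _ w).trans_lt (hdeg w))

theorem exists_isOrthRep (hE : 2 ≤ finrank ℝ E) (hdeg : ∀ v, G.degree v < finrank ℝ E)
    (s : Finset V) : ∃ f : V → E, G.IsOrthRep s f := by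
  classical
  induction s using Finset.strongInduction with
  | H s ih =>
  obtain rfl | ⟨w, hw⟩ := s.eq_empty_or_nonempty
  · exact ⟨0, G.isOrthRep_empty 0⟩
  set c := {v ∈ s | G.ReachIn s v w}
  have hcs : c ⊆ s := filter_subset _ s
  have hwc : w ∈ c := mem_filter.2 ⟨hw, .refl⟩
  obtain ⟨f, hf⟩ := ih (s \ c) (sdiff_ssubset hcs ⟨w, hwc⟩)
  obtain ⟨g, hg⟩ := exists_isOrthRep_of_forall_reachIn (E := E) hdeg hwc
    fun v hv => (mem_filter.1 hv).2.filter
  obtain ⟨Q, hQ⟩ := exists_linearIsometryEquiv_disjoint_image hE (c.finite_toSet.image g)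
    ((s \ c).finite_toSet.image f) fun ⟨v, hv, h0⟩ => by simpa [h0] using hg.norm_eq_one v hv
  rw [← sdiff_union_of_subset hcs]
  refine ⟨_, hf.piecewise (hg.comp_linearIsometry Q.toLinearIsometry) sdiff_disjoint ?_ ?_⟩
  · intro u hu v hv huv
    have hus := (mem_sdiff.1 hu).1
    exact (mem_sdiff.1 hu).2 (mem_filter.2 ⟨hus, .head ⟨huv, hus, hcs hv⟩ (mem_filter.1 hv).2⟩)
  · rw [Set.image_comp]
    exact hQ.symm

end Extension

end OrthRep

end SimpleGraph

theorem SimpleGraph.IsOrthRep.sphereRealizable {V : Type*} [Fintype V] {G : SimpleGraph V} {d : ℕ}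
    {f : V → EuclideanSpace ℝ (Fin d)} (hf : G.IsOrthRep Finset.univ f) :
    SphereRealizable G d := by
  have hsqrt : ‖(√2)⁻¹‖ * √2 = 1 := by
    rw [norm_inv, Real.norm_of_nonneg (by positivity), inv_mul_cancel₀ (by positivity)]
  refine ⟨fun v => (√2)⁻¹ • f v, (smul_right_injective _ (by positivity)).comp
    (by simpa using hf.injOn), fun v => ?_, fun u v huv => ?_⟩
  · simp [norm_smul, hf.norm_eq_one v (Finset.mem_univ v)]
  · have huv' : ‖f u - f v‖ = √2 := by
      rw [← Real.sqrt_sq (norm_nonneg _), norm_sub_sq_real, hf.norm_eq_one u (Finset.mem_univ u),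
        hf.norm_eq_one v (Finset.mem_univ v), hf.inner_eq_zero u (Finset.mem_univ u) v
        (Finset.mem_univ v) huv]
      norm_num
    rw [dist_eq_norm, ← smul_sub, norm_smul, huv', hsqrt]

theorem stmt_1 {V : Type*} [Fintype V] (d : ℕ) (hd : 2 ≤ d)
    (G : SimpleGraph V) [DecidableRel G.Adj] (hdeg : ∀ v : V, G.degree v ≤ d - 1) :
    SphereRealizable G d := by
  obtain ⟨f, hf⟩ := G.exists_isOrthRep (E := EuclideanSpace ℝ (Fin d))
    (by rwa [finrank_euclideanSpace_fin])
    (fun v => by rw [finrank_euclideanSpace_fin]; have := hdeg v; omega) Finset.univ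
  exact hf.sphereRealizable
end

section
/- Let d ≥ 1 and let G be the graph on 2d + 2 vertices that is the disjoint union of a complete graph K_{d+2} on d + 2 vertices and d isolated vertices. Then neither G nor its complement is realizable in ℝ^d. -/
/-!
Translating `d + 2` points at pairwise distance `1` so that one of them is the origin leaves
`d + 1` unit vectors with pairwise inner products `1 / 2`; their Gram matrix `(I + J) / 2` is
nonsingular, so they are linearly independent, which is impossible in `ℝ^d`.

In the complement, the `d` formerly isolated vertices give such a family of `d` vectors, now a
basis of `ℝ^d`, and every clique vertex is at distance `1` from all of them. Relative to one clique
vertex `x₀`, any other clique vertex `x` satisfies `‖x - x₀‖² = 2 ⟪x - x₀, v⟫` for every basis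
vector `v`, which determines `x`. So there are at most two clique vertices, but `d + 2 ≥ 3`.
-/

open InnerProductSpace Finset Module

/-- A graph `G` is realizable in `ℝ^d` if there is an injective map from its vertices to
`EuclideanSpace ℝ (Fin d)` sending adjacent vertices to points at distance `1`. -/
def GraphRealizable {V : Type*} (G : SimpleGraph V) (d : ℕ) : Prop :=
  ∃ f : V → EuclideanSpace ℝ (Fin d), Function.Injective f ∧
    ∀ u v : V, G.Adj u v → dist (f u) (f v) = 1

/-- The disjoint union of a complete graph on `Fin a` and `b` isolated vertices:
two vertices are adjacent exactly when they are distinct and both lie in the left part. -/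
def cliquePlusIsolated (a b : ℕ) : SimpleGraph (Fin a ⊕ Fin b) where
  Adj x y := x ≠ y ∧ x.isLeft ∧ y.isLeft
  symm := ⟨fun x y h => ⟨h.1.symm, h.2.2, h.2.1⟩⟩
  loopless := ⟨fun x h => h.1 rfl⟩

section cliquePlusIsolated

variable {a b : ℕ}

theorem cliquePlusIsolated_adj_inl_inl {i j : Fin a} :
    (cliquePlusIsolated a b).Adj (.inl i) (.inl j) ↔ i ≠ j := by
  simp [cliquePlusIsolated]

theorem compl_cliquePlusIsolated_adj_inl_inr (i : Fin a) (j : Fin b) :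
    (cliquePlusIsolated a b)ᶜ.Adj (.inl i) (.inr j) := by
  simp [cliquePlusIsolated]

theorem compl_cliquePlusIsolated_adj_inr_inr {i j : Fin b} :
    (cliquePlusIsolated a b)ᶜ.Adj (.inr i) (.inr j) ↔ i ≠ j := by
  simp [cliquePlusIsolated]

end cliquePlusIsolated

section UnitDistance

variable {E : Type*} [NormedAddCommGroup E] [InnerProductSpace ℝ E]

/-- If `∑ g i • v i = 0`, pairing with `v j` gives `g j = -∑ g i` for every `j`,
which forces the sum, hence every coefficient, to vanish. -/
theorem linearIndependent_of_norm_eq_one_of_inner_eq_half {ι : Type*} [Fintype ι]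
    {v : ι → E} (hnorm : ∀ i, ‖v i‖ = 1) (hinner : Pairwise fun i j => ⟪v i, v j⟫_ℝ = 1 / 2) :
    LinearIndependent ℝ v := by
  classical
  rw [Fintype.linearIndependent_iff]
  intro g hg
  set S := ∑ i, g i
  have hcoeff : ∀ j, g j = -S := by
    intro j
    have hpair : ∀ i, g i * ⟪v i, v j⟫_ℝ = g i / 2 + if i = j then g i / 2 else 0 := by
      intro i
      by_cases h : i = j
      · subst h
        rw [real_inner_self_eq_norm_sq, hnorm, if_pos rfl]
        ring
      · rw [hinner h, if_neg h]
        ring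
    have h0 : ⟪∑ i, g i • v i, v j⟫_ℝ = 0 := by rw [hg, inner_zero_left]
    simp only [sum_inner, real_inner_smul_left, hpair, sum_add_distrib, sum_ite_eq',
      mem_univ, if_true, ← sum_div] at h0
    linarith
  have hS : S = 0 := by
    have h : S = ∑ _j : ι, -S := sum_congr rfl fun j _ => hcoeff j
    rw [sum_const, card_univ, nsmul_eq_mul] at h
    have h' : (1 + (Fintype.card ι : ℝ)) * S = 0 := by linarith
    exact (mul_eq_zero.mp h').resolve_left (by positivity)
  intro i
  rw [hcoeff, hS, neg_zero]

theorem linearIndependent_sub_of_dist_eq_one {ι : Type*} [Fintype ι] {p : ι → E} {o : E}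
    (hp : Pairwise fun i j => dist (p i) (p j) = 1) (ho : ∀ i, dist (p i) o = 1) :
    LinearIndependent ℝ fun i => p i - o := by
  refine linearIndependent_of_norm_eq_one_of_inner_eq_half (fun i => ?_) fun i j hij => ?_
  · rw [← dist_eq_norm, ho]
  · have h := norm_sub_sq_real (p i - o) (p j - o)
    rw [sub_sub_sub_cancel_right, ← dist_eq_norm, ← dist_eq_norm, ← dist_eq_norm, hp hij,
      ho, ho] at h
    linarith

theorem le_finrank_of_pairwise_dist_eq_one [FiniteDimensional ℝ E] {n : ℕ} {p : Fin (n + 1) → E}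
    (hp : Pairwise fun i j => dist (p i) (p j) = 1) : n ≤ finrank ℝ E := by
  simpa using (linearIndependent_sub_of_dist_eq_one (p := p ∘ Fin.succ) (o := p 0)
    (hp.comp_of_injective (Fin.succ_injective _))
    fun i => hp (Fin.succ_ne_zero i)).fintype_card_le_finrank

/-- `‖x - v‖ = ‖v‖` says `⟪x / ‖x‖², v⟫ = 1 / 2`, so the inversion of `x` in the unit sphere
is pinned down by its inner products with a basis. -/
theorem Module.Basis.eq_of_forall_norm_sub_eq_norm {ι : Type*} (b : Basis ι ℝ E) {x y : E}
    (hx : x ≠ 0) (hy : y ≠ 0) (hxb : ∀ i, ‖x - b i‖ = ‖b i‖) (hyb : ∀ i, ‖y - b i‖ = ‖b i‖) :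
    x = y := by
  have inversion_inner : ∀ z : E, z ≠ 0 → (∀ i, ‖z - b i‖ = ‖b i‖) →
      ∀ i, ⟪(‖z‖ ^ 2)⁻¹ • z, b i⟫_ℝ = 1 / 2 := by
    intro z hz hzb i
    have h := norm_sub_sq_real z (b i)
    rw [hzb] at h
    have hz' : ‖z‖ ≠ 0 := norm_ne_zero_iff.mpr hz
    rw [real_inner_smul_left]
    field_simp
    linarith
  have h := ext_inner_right_basis b fun i =>
    (inversion_inner x hx hxb i).trans (inversion_inner y hy hyb i).symm
  have hnorm : ‖x‖ = ‖y‖ := by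
    have h' := congrArg (‖·‖) h
    simp only [_root_.norm_smul, norm_inv, norm_pow, norm_norm] at h'
    field_simp at h'
    exact h'.symm
  rw [hnorm] at h
  exact smul_right_injective E (by positivity) h

theorem eq_of_forall_dist_eq_one [FiniteDimensional ℝ E] {ι : Type*} [Fintype ι]
    (hcard : Fintype.card ι = finrank ℝ E) {y : ι → E}
    (hy : Pairwise fun i j => dist (y i) (y j) = 1) {x₀ x₁ x₂ : E}
    (h₀ : ∀ i, dist x₀ (y i) = 1) (h₁ : ∀ i, dist x₁ (y i) = 1) (h₂ : ∀ i, dist x₂ (y i) = 1)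
    (h₀₁ : x₁ ≠ x₀) (h₀₂ : x₂ ≠ x₀) : x₁ = x₂ := by
  have hli := linearIndependent_sub_of_dist_eq_one hy fun i => (dist_comm _ _).trans (h₀ i)
  let b := basisOfLinearIndependentOfCardEqFinrank' _ hli hcard
  have hb : ∀ x, (∀ i, dist x (y i) = 1) → ∀ i, ‖(x - x₀) - b i‖ = ‖b i‖ := by
    intro x hx i
    simp only [b, coe_basisOfLinearIndependentOfCardEqFinrank']
    rw [sub_sub_sub_cancel_right, ← dist_eq_norm, ← dist_eq_norm, hx, dist_comm, h₀]
  exact sub_left_injective <| b.eq_of_forall_norm_sub_eq_norm (sub_ne_zero.mpr h₀₁)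
    (sub_ne_zero.mpr h₀₂) (hb x₁ h₁) (hb x₂ h₂)

end UnitDistance

theorem stmt_7 (d : ℕ) (hd : 1 ≤ d) :
    ¬ GraphRealizable (cliquePlusIsolated (d + 2) d) d ∧
    ¬ GraphRealizable (cliquePlusIsolated (d + 2) d)ᶜ d := by
  constructor
  · rintro ⟨f, -, hf⟩
    have h := le_finrank_of_pairwise_dist_eq_one (p := fun i => f (.inl i))
      fun i j hij => hf _ _ (cliquePlusIsolated_adj_inl_inl.mpr hij)
    rw [finrank_euclideanSpace_fin] at h
    omega
  · rintro ⟨f, hinj, hf⟩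
    have hx : ∀ k i, dist (f (.inl k)) (f (.inr i)) = 1 := fun k i =>
      hf _ _ (compl_cliquePlusIsolated_adj_inl_inr k i)
    have hne : ∀ k l : Fin (d + 2), k.val ≠ l.val → f (.inl k) ≠ f (.inl l) := fun k l h =>
      hinj.ne (by simpa [Fin.ext_iff] using h)
    have h := eq_of_forall_dist_eq_one (by simp) (y := fun i => f (.inr i))
      (fun i j hij => hf _ _ (compl_cliquePlusIsolated_adj_inr_inr.mpr hij))
      (hx ⟨0, by omega⟩) (hx ⟨1, by omega⟩) (hx ⟨2, by omega⟩)
      (hne _ _ (by simp)) (hne _ _ (by simp))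
    exact hne _ _ (by simp) h
end

section
/- Let G = (V, E) be a finite simple graph with maximum degree at most k, let α ≥ 1, and let k_1, …, k_α be non-negative integers with k_1 + ⋯ + k_α = k − α + 1. Then there is a partition V = V_1 ∪ ⋯ ∪ V_α of the vertex set into α pairwise disjoint parts such that for each i = 1, …, α the induced subgraph G[V_i] has maximum degree at most k_i. -/
/-!
Lovász's potential argument. Weight a monochromatic edge of colour `c` by `1 / (k_c + 1)` and
take a colouring minimising the total weight. If some vertex `v` of colour `c` had more than
`k_c` neighbours of its own colour, then, since `deg v ≤ k < ∑ (k_i + 1)`, some colour `j` is used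
by at most `k_j` neighbours of `v`; recolouring `v` with `j` removes weight at least `1` and adds
weight less than `1`, contradicting minimality.
-/

open Finset

theorem Finset.sum_sum_eq_sum_erase_sum_erase_add_two_nsmul {α R : Type*} [Fintype α]
    [DecidableEq α] [AddCommMonoid R] (F : α → α → R) (hF : ∀ a b, F a b = F b a) (a : α)
    (ha : F a a = 0) :
    ∑ x, ∑ y, F x y = ∑ x ∈ univ.erase a, ∑ y ∈ univ.erase a, F x y + 2 • ∑ y, F a y := by
  have hcol : ∑ x ∈ univ.erase a, F x a = ∑ y, F a y := by
    rw [← add_sum_erase _ _ (mem_univ a), ha, zero_add]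
    exact sum_congr rfl fun x _ => hF x a
  rw [← add_sum_erase _ _ (mem_univ a),
    sum_congr rfl fun x _ => (add_sum_erase univ (F x) (mem_univ a)).symm,
    sum_add_distrib, hcol, two_nsmul]
  abel

namespace SimpleGraph

variable {V ι : Type*} (G : SimpleGraph V) [DecidableRel G.Adj]

section colorDegree

variable [Fintype V] [DecidableEq ι]

def colorDegree (P : V → ι) (v : V) (c : ι) : ℕ :=
  #{u ∈ G.neighborFinset v | P u = c}

theorem sum_colorDegree [Fintype ι] (P : V → ι) (v : V) :
    ∑ c, G.colorDegree P v c = G.degree v :=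
  (card_eq_sum_card_fiberwise fun u _ => mem_univ (P u)).symm

theorem exists_colorDegree_le [Fintype ι] (P : V → ι) (v : V) (ks : ι → ℕ)
    (h : G.degree v < ∑ c, (ks c + 1)) : ∃ j, G.colorDegree P v j ≤ ks j := by
  by_contra! hlt
  have : ∑ c, (ks c + 1) ≤ G.degree v :=
    G.sum_colorDegree P v ▸ sum_le_sum fun c _ => hlt c
  omega

theorem colorDegree_update_self [DecidableEq V] (P : V → ι) (v : V) (c j : ι) :
    G.colorDegree (Function.update P v j) v c = G.colorDegree P v c := by
  refine congrArg card (filter_congr fun u hu => ?_)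
  rw [Function.update_of_ne (G.ne_of_adj ((G.mem_neighborFinset v u).1 hu)).symm]

end colorDegree

section potential

variable [DecidableEq ι] (w : ι → ℚ)

def conflictWeight (P : V → ι) (v u : V) : ℚ :=
  if G.Adj v u ∧ P u = P v then w (P v) else 0

theorem conflictWeight_comm (P : V → ι) (v u : V) :
    G.conflictWeight w P v u = G.conflictWeight w P u v := by
  unfold conflictWeight
  by_cases h : P u = P v
  · simp [h, G.adj_comm]
  · simp [h, Ne.symm h]

theorem conflictWeight_self (P : V → ι) (v : V) : G.conflictWeight w P v v = 0 := by
  simp [conflictWeight]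

theorem conflictWeight_update_of_ne [DecidableEq V] (P : V → ι) {a v u : V} (j : ι)
    (hv : v ≠ a) (hu : u ≠ a) :
    G.conflictWeight w (Function.update P a j) v u = G.conflictWeight w P v u := by
  simp only [conflictWeight, Function.update_of_ne hv, Function.update_of_ne hu]

variable [Fintype V]

/-- Twice the total weight of the monochromatic edges, an edge of colour `c` weighing `w c`. -/
def potential (P : V → ι) : ℚ :=
  ∑ v, ∑ u, G.conflictWeight w P v u

theorem sum_conflictWeight (P : V → ι) (v : V) :
    ∑ u, G.conflictWeight w P v u = G.colorDegree P v (P v) * w (P v) := by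
  simp only [conflictWeight]
  rw [← sum_filter, sum_const, nsmul_eq_mul, colorDegree, neighborFinset_eq_filter,
    filter_filter]

theorem potential_update_lt [DecidableEq V] (P : V → ι) (a : V) (j : ι)
    (h : G.colorDegree P a j * w j < G.colorDegree P a (P a) * w (P a)) :
    G.potential w (Function.update P a j) < G.potential w P := by
  unfold potential
  rw [sum_sum_eq_sum_erase_sum_erase_add_two_nsmul _ (G.conflictWeight_comm w _) a
      (G.conflictWeight_self w _ a),
    sum_sum_eq_sum_erase_sum_erase_add_two_nsmul _ (G.conflictWeight_comm w _) a
      (G.conflictWeight_self w _ a),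
    sum_conflictWeight, sum_conflictWeight, Function.update_self, colorDegree_update_self,
    sum_congr rfl fun v hv => sum_congr rfl fun u hu =>
      G.conflictWeight_update_of_ne w P j (ne_of_mem_erase hv) (ne_of_mem_erase hu)]
  gcongr

theorem exists_forall_colorDegree_mul_le [Fintype ι] [Nonempty ι] :
    ∃ P : V → ι, ∀ v j, G.colorDegree P v (P v) * w (P v) ≤ G.colorDegree P v j * w j := by
  classical
  obtain ⟨P, hP⟩ := Finite.exists_min (G.potential w)
  exact ⟨P, fun v j => le_of_not_gt fun h => (G.potential_update_lt w P v j h).not_ge (hP _)⟩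

end potential

theorem exists_forall_colorDegree_self_le [Fintype V] [Fintype ι] [DecidableEq ι] [Nonempty ι]
    (ks : ι → ℕ) (hdeg : ∀ v, G.degree v < ∑ c, (ks c + 1)) :
    ∃ P : V → ι, ∀ v, G.colorDegree P v (P v) ≤ ks (P v) := by
  obtain ⟨P, hP⟩ := G.exists_forall_colorDegree_mul_le fun c => ((ks c : ℚ) + 1)⁻¹
  refine ⟨P, fun v => ?_⟩
  obtain ⟨j, hj⟩ := G.exists_colorDegree_le P v ks (hdeg v)
  by_contra! hlt
  have hlarge : 1 ≤ (G.colorDegree P v (P v) : ℚ) * ((ks (P v) : ℚ) + 1)⁻¹ := by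
    rw [← div_eq_mul_inv, one_le_div (by positivity)]
    exact_mod_cast hlt
  have hsmall : (G.colorDegree P v j : ℚ) * ((ks j : ℚ) + 1)⁻¹ < 1 := by
    rw [← div_eq_mul_inv, div_lt_one (by positivity)]
    exact_mod_cast Nat.lt_succ_of_le hj
  exact (hsmall.trans_le hlarge).not_ge (hP v j)

end SimpleGraph

theorem stmt_8_general {V : Type*} [Fintype V] (G : SimpleGraph V) [DecidableRel G.Adj]
    (k α : ℕ) (hdeg : ∀ v : V, G.degree v ≤ k)
    (ks : Fin α → ℕ) (hsum : (∑ i, ks i) + α = k + 1) :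
    ∃ P : V → Fin α, ∀ v : V,
      ((G.neighborFinset v).filter (fun u => P u = P v)).card ≤ ks (P v) := by
  have : NeZero α := ⟨by rintro rfl; simp at hsum⟩
  have hks : ∑ i, (ks i + 1) = k + 1 := by simpa [sum_add_distrib] using hsum
  exact G.exists_forall_colorDegree_self_le ks fun v => hks ▸ Nat.lt_succ_of_le (hdeg v)

theorem stmt_8 {V : Type*} [Fintype V] (G : SimpleGraph V) [DecidableRel G.Adj]
    (k α : ℕ) (hα : 1 ≤ α) (hdeg : ∀ v : V, G.degree v ≤ k)
    (ks : Fin α → ℕ) (hsum : (∑ i, ks i) + α = k + 1) :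
    ∃ P : V → Fin α, ∀ v : V,
      ((G.neighborFinset v).filter (fun u => P u = P v)).card ≤ ks (P v) :=
  stmt_8_general G k α hdeg ks hsum
end

section
/- Let d ≥ 2 be even and let G = (V, E) be a finite simple graph with maximum degree at most d. Then there is a partition V = V_1 ∪ ⋯ ∪ V_{d/2} into d/2 pairwise disjoint parts such that: the induced subgraph G[V_i] has maximum degree at most 1 for every 1 ≤ i < d/2; the induced subgraph G[V_{d/2}] has maximum degree at most 2; and every vertex v ∈ V_{d/2} that has exactly 2 neighbours in V_{d/2} has exactly 2 neighbours in each part V_i, i = 1, …, d/2. -/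
/-!
Take `P` minimising, lexicographically, first `Φ P = ∑ v, w (P v) * n_{P v}(v)` (where `n_i(v)` is
the number of neighbours of `v` in part `i`, and `w` is `1` on the last part and `2` elsewhere),
then the size of the last part. Moving a single vertex `v` to part `j` changes `Φ` by
`2 * (w j * n_j(v) - w (P v) * n_{P v}(v))`, so at the minimum `w (P v) * n_{P v}(v) ≤ w j * n_j(v)`
for every `j`, strictly if `v` would leave the last part. As `∑ j, n_j(v) = deg v ≤ 2 * (d / 2)`,
a vertex with too many neighbours in its own part would force more than `d` neighbours in total.
-/

/-- The number of neighbours of `v` (in `G`) lying in the part `P ⁻¹' {i}`. -/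
def nbrCountIn {V : Type*} [Fintype V] (G : SimpleGraph V) [DecidableRel G.Adj]
    {α : ℕ} (P : V → Fin α) (v : V) (i : Fin α) : ℕ :=
  ((G.neighborFinset v).filter (fun u => P u = i)).card

open Finset Function

theorem Fintype.sum_add_eq_sum_add_of_forall_ne {ι M : Type*} [Fintype ι] [DecidableEq ι]
    [AddCommMonoid M] {f g : ι → M} (v : ι) (h : ∀ x, x ≠ v → f x = g x) :
    ∑ x, f x + g v = ∑ x, g x + f v := by
  have hrest : ∑ x ∈ univ.erase v, f x = ∑ x ∈ univ.erase v, g x :=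
    Finset.sum_congr rfl fun x hx => h x (ne_of_mem_erase hx)
  rw [← add_sum_erase univ f (mem_univ v), ← add_sum_erase univ g (mem_univ v), hrest]
  abel

theorem two_mul_card_add_le_sum_add_two {ι : Type*} [Fintype ι] [DecidableEq ι] {n : ι → ℕ}
    (i : ι) (h : ∀ j, j ≠ i → 2 ≤ n j) :
    2 * Fintype.card ι + n i ≤ ∑ j, n j + 2 := by
  have hrest :=
    card_nsmul_le_sum (univ.erase i) (fun j => n j) 2 fun j hj => h j (ne_of_mem_erase hj)
  rw [card_erase_of_mem (mem_univ i), card_univ, smul_eq_mul] at hrest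
  have hpos : 0 < Fintype.card ι := Fintype.card_pos_iff.mpr ⟨i⟩
  have := add_sum_erase univ n (mem_univ i)
  omega

theorem card_filter_update_add_one {V β : Type*} [Fintype V] [DecidableEq V] [DecidableEq β]
    (P : V → β) {v : V} {ℓ j : β} (hv : P v = ℓ) (hj : j ≠ ℓ) :
    #{u | update P v j u = ℓ} + 1 = #{u | P u = ℓ} := by
  have key := Fintype.sum_add_eq_sum_add_of_forall_ne
    (f := fun u => if update P v j u = ℓ then 1 else 0) (g := fun u => if P u = ℓ then 1 else 0) v
    (fun u hu => by simp only [update_of_ne hu])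
  simp only [update_self, hv, hj, if_true, if_false, add_zero, ← Finset.card_filter] at key
  exact key

section partWeight

variable {ι : Type*} [Fintype ι] [DecidableEq ι] {ℓ i : ι} {n : ι → ℕ}

def partWeight (ℓ i : ι) : ℕ := if i = ℓ then 1 else 2

theorem le_one_of_partWeight_mul_le (hi : i ≠ ℓ)
    (hopt : ∀ j, partWeight ℓ i * n i ≤ partWeight ℓ j * n j)
    (hsum : ∑ j, n j ≤ 2 * Fintype.card ι) : n i ≤ 1 := by
  by_contra! hcon
  have hℓ := hopt ℓ
  have hbig : ∀ j, j ≠ ℓ → 2 ≤ n j := fun j hj => by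
    have := hopt j
    simp only [partWeight, hi, hj, if_false] at this
    omega
  have := two_mul_card_add_le_sum_add_two ℓ hbig
  simp only [partWeight, hi, if_true, if_false] at hℓ
  omega

theorem le_two_of_partWeight_mul_le (hopt : ∀ j, partWeight ℓ ℓ * n ℓ ≤ partWeight ℓ j * n j)
    (hsum : ∑ j, n j ≤ 2 * Fintype.card ι) : n ℓ ≤ 2 := by
  by_contra! hcon
  have hbig : ∀ j, j ≠ ℓ → 2 ≤ n j := fun j hj => by
    have := hopt j
    simp only [partWeight, hj, if_true, if_false] at this
    omega
  have := two_mul_card_add_le_sum_add_two ℓ hbig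
  omega

theorem forall_eq_two_of_partWeight_mul_lt (hℓ : n ℓ = 2)
    (hopt : ∀ j, j ≠ ℓ → partWeight ℓ ℓ * n ℓ < partWeight ℓ j * n j)
    (hsum : ∑ j, n j ≤ 2 * Fintype.card ι) (i : ι) : n i = 2 := by
  have hbig : ∀ j, 2 ≤ n j := fun j => by
    by_cases hj : j = ℓ
    · rw [hj, hℓ]
    · have := hopt j hj
      simp only [partWeight, hj, if_true, if_false] at this
      omega
  have := two_mul_card_add_le_sum_add_two i fun j _ => hbig j
  have := hbig i
  omega

end partWeight

namespace SimpleGraph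

variable {V : Type*} [Fintype V] (G : SimpleGraph V) [DecidableRel G.Adj] {α : ℕ}

theorem nbrCountIn_eq_sum (P : V → Fin α) (u : V) (c : Fin α) :
    nbrCountIn G P u c = ∑ x, if G.Adj u x ∧ P x = c then 1 else 0 := by
  rw [nbrCountIn, neighborFinset_eq_filter, filter_filter, card_filter]

theorem sum_nbrCountIn (P : V → Fin α) (v : V) :
    ∑ c, nbrCountIn G P v c = G.degree v := by
  classical
  rw [degree, card_eq_sum_card_fiberwise (f := P) (t := univ) fun x _ => mem_univ _]
  rfl

theorem sum_weight_mul_ite_adj (w : Fin α → ℕ) (P : V → Fin α) (v : V) (c : Fin α) :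
    ∑ u, w (P u) * (if G.Adj u v ∧ c = P u then 1 else 0) = w c * nbrCountIn G P v c := by
  rw [nbrCountIn_eq_sum, mul_sum]
  refine sum_congr rfl fun u _ => ?_
  by_cases h : G.Adj u v ∧ c = P u
  · rw [if_pos h, if_pos ⟨h.1.symm, h.2.symm⟩, h.2]
  · rw [if_neg h, if_neg fun h' => h ⟨h'.1.symm, h'.2.symm⟩, mul_zero, mul_zero]

variable [DecidableEq V]

theorem nbrCountIn_update (P : V → Fin α) (v : V) (j : Fin α) (u : V) (c : Fin α) :
    nbrCountIn G (update P v j) u c + (if G.Adj u v ∧ P v = c then 1 else 0)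
      = nbrCountIn G P u c + (if G.Adj u v ∧ j = c then 1 else 0) := by
  simp only [nbrCountIn_eq_sum]
  convert Fintype.sum_add_eq_sum_add_of_forall_ne
    (f := fun x => if G.Adj u x ∧ update P v j x = c then 1 else 0)
    (g := fun x => if G.Adj u x ∧ P x = c then 1 else 0) v
    (fun x hx => by simp only [update_of_ne hx]) using 2
  simp only [update_self]

-- Every edge inside part `i` is counted twice with weight `w i`, hence the factor `2` below.
def weightedInternalDegreeSum (w : Fin α → ℕ) (P : V → Fin α) : ℕ :=
  ∑ u, w (P u) * nbrCountIn G P u (P u)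

theorem weightedInternalDegreeSum_update (w : Fin α → ℕ) (P : V → Fin α) (v : V) (j : Fin α) :
    weightedInternalDegreeSum G w (update P v j) + 2 * (w (P v) * nbrCountIn G P v (P v))
      = weightedInternalDegreeSum G w P + 2 * (w j * nbrCountIn G P v j) := by
  have key := Fintype.sum_add_eq_sum_add_of_forall_ne
    (f := fun u => w (update P v j u) * nbrCountIn G (update P v j) u (update P v j u)
      + w (P u) * (if G.Adj u v ∧ P v = P u then 1 else 0))
    (g := fun u => w (P u) * nbrCountIn G P u (P u)
      + w (P u) * (if G.Adj u v ∧ j = P u then 1 else 0)) v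
    (fun u hu => by simp only [update_of_ne hu, ← mul_add, nbrCountIn_update])
  have hself := nbrCountIn_update G P v j v j
  simp only [sum_add_distrib, sum_weight_mul_ite_adj, update_self, G.irrefl, false_and,
    if_false, mul_zero, add_zero] at key hself
  rw [hself] at key
  unfold weightedInternalDegreeSum
  omega

theorem exists_partition_forall_weight_mul_le (w : Fin α → ℕ) (ℓ : Fin α) :
    ∃ P : V → Fin α,
      (∀ v j, w (P v) * nbrCountIn G P v (P v) ≤ w j * nbrCountIn G P v j) ∧
      ∀ v j, P v = ℓ → j ≠ ℓ → w (P v) * nbrCountIn G P v (P v) < w j * nbrCountIn G P v j := by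
  have : Nonempty (Fin α) := ⟨ℓ⟩
  -- The second coordinate makes moving a vertex out of `ℓ` at equal weighted cost an improvement.
  obtain ⟨P, hP⟩ := Finite.exists_min fun P : V → Fin α =>
    toLex (weightedInternalDegreeSum G w P, #{u | P u = ℓ})
  refine ⟨P, fun v j => ?_, fun v j hv hj => ?_⟩
  · have hupd := weightedInternalDegreeSum_update G w P v j
    have := Prod.Lex.toLex_le_toLex.mp (hP (update P v j))
    omega
  · have hupd := weightedInternalDegreeSum_update G w P v j
    have hcard := card_filter_update_add_one P hv hj
    have := Prod.Lex.toLex_le_toLex.mp (hP (update P v j))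
    omega

end SimpleGraph

open SimpleGraph in
theorem stmt_9 {V : Type*} [Fintype V] (d : ℕ) (hd : 2 ≤ d) (heven : Even d)
    (G : SimpleGraph V) [DecidableRel G.Adj] (hdeg : ∀ v : V, G.degree v ≤ d) :
    ∃ P : V → Fin (d / 2),
      (∀ v : V, (P v).val < d / 2 - 1 → nbrCountIn G P v (P v) ≤ 1) ∧
      (∀ v : V, (P v).val = d / 2 - 1 → nbrCountIn G P v (P v) ≤ 2) ∧
      (∀ v : V, (P v).val = d / 2 - 1 → nbrCountIn G P v (P v) = 2 →
        ∀ i : Fin (d / 2), nbrCountIn G P v i = 2) := by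
  classical
  have hdk : 2 * (d / 2) = d := Nat.two_mul_div_two_of_even heven
  let ℓ : Fin (d / 2) := ⟨d / 2 - 1, by omega⟩
  obtain ⟨P, hle, hlt⟩ := G.exists_partition_forall_weight_mul_le (partWeight ℓ) ℓ
  have hsum (v : V) : ∑ j, nbrCountIn G P v j ≤ 2 * Fintype.card (Fin (d / 2)) := by
    rw [sum_nbrCountIn, Fintype.card_fin, hdk]
    exact hdeg v
  refine ⟨P, fun v hv => ?_, fun v hv => ?_, fun v hv h2 => ?_⟩
  · exact le_one_of_partWeight_mul_le (fun h => by simp [h, ℓ] at hv) (hle v) (hsum v)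
  · have hvℓ : P v = ℓ := Fin.ext hv
    have hopt := hle v
    rw [hvℓ] at hopt ⊢
    exact le_two_of_partWeight_mul_le hopt (hsum v)
  · have hvℓ : P v = ℓ := Fin.ext hv
    have hopt := hlt v
    rw [hvℓ] at hopt h2
    exact forall_eq_two_of_partWeight_mul_lt h2 (fun j => hopt j rfl) (hsum v)
end

section
/- Let d ≥ 2, let G be a finite simple graph, and let x be a vertex of G of degree at most d − 2. If the graph G − x obtained by deleting x (and all edges at x) is realizable on the sphere 𝕊^{d−1} of radius 1/√2 in ℝ^d, then G is also realizable on 𝕊^{d−1}. -/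
open Module Metric Submodule
open scoped RealInnerProductSpace

theorem infinite_sphere_zero {E : Type*} [NormedAddCommGroup E] [NormedSpace ℝ E]
    (hE : 1 < Module.rank ℝ E) {r : ℝ} (hr : 0 < r) : (sphere (0 : E) r).Infinite := by
  have : Nontrivial E := rank_pos_iff_nontrivial.1 (zero_lt_one.trans hE)
  obtain ⟨v, hv⟩ := exists_norm_eq E hr.le
  have hv0 : v ≠ 0 := norm_ne_zero_iff.1 (hv ▸ hr.ne')
  refine (isPreconnected_sphere hE 0 r).infinite_of_nontrivial ⟨v, ?_, -v, ?_, ?_⟩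
  · simpa using hv
  · simpa using hv
  · intro h
    have : (2 : ℝ) • v = 0 := by rw [two_smul]; nth_rewrite 2 [h]; exact add_neg_cancel v
    exact hv0 (by simpa using this)

theorem Submodule.infinite_setOf_mem_norm_eq {E : Type*} [NormedAddCommGroup E]
    [NormedSpace ℝ E] (K : Submodule ℝ E) (hK : 1 < finrank ℝ K) {r : ℝ} (hr : 0 < r) :
    {p : E | p ∈ K ∧ ‖p‖ = r}.Infinite := by
  have hsphere := infinite_sphere_zero (one_lt_rank_of_one_lt_finrank hK) hr
  refine (hsphere.image Subtype.val_injective.injOn).mono ?_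
  rintro _ ⟨p, hp, rfl⟩
  exact ⟨p.2, by simpa using hp⟩

theorem finrank_le_card_add_finrank_orthogonal_span {E : Type*} [NormedAddCommGroup E]
    [InnerProductSpace ℝ E] [FiniteDimensional ℝ E] (T : Finset E) :
    finrank ℝ E ≤ T.card + finrank ℝ (span ℝ (T : Set E))ᗮ := by
  rw [← finrank_add_finrank_orthogonal (span ℝ (T : Set E))]
  exact Nat.add_le_add_right (finrank_span_finset_le_card T) _

theorem dist_eq_one_of_inner_eq_zero {E : Type*} [NormedAddCommGroup E] [InnerProductSpace ℝ E]
    {a b : E} (ha : ‖a‖ = 1 / √2) (hb : ‖b‖ = 1 / √2) (hab : ⟪a, b⟫ = 0) : dist a b = 1 := by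
  have hsq : dist a b ^ 2 = 1 := by
    rw [dist_eq_norm, norm_sub_sq_real, ha, hb, hab, div_pow, Real.sq_sqrt zero_le_two]
    norm_num
  nlinarith [dist_nonneg (x := a) (y := b)]

theorem SphereRealizable.of_induce_ne {V : Type*} {d : ℕ} {G : SimpleGraph V} {x : V}
    (f : {v : V | v ≠ x} → EuclideanSpace ℝ (Fin d)) (hf_inj : Function.Injective f)
    (hf_norm : ∀ v, ‖f v‖ = 1 / √2)
    (hf_adj : ∀ u v : {v : V | v ≠ x}, G.Adj u v → dist (f u) (f v) = 1)
    {p : EuclideanSpace ℝ (Fin d)} (hp_norm : ‖p‖ = 1 / √2) (hp_new : p ∉ Set.range f)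
    (hp_orth : ∀ v : {v : V | v ≠ x}, G.Adj x v → ⟪p, f v⟫ = 0) : SphereRealizable G d := by
  classical
  have hx_adj : ∀ v : {v : V | v ≠ x}, G.Adj x v → dist p (f v) = 1 := fun v hv =>
    dist_eq_one_of_inner_eq_zero hp_norm (hf_norm v) (hp_orth v hv)
  refine ⟨fun v => if hv : v = x then p else f ⟨v, hv⟩, ?_, ?_, ?_⟩
  · intro u v huv
    by_cases hu : u = x <;> by_cases hv : v = x <;> simp only [hu, hv, dite_true, dite_false] at huv
    · exact hu.trans hv.symm
    · exact absurd ⟨_, huv.symm⟩ hp_new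
    · exact absurd ⟨_, huv⟩ hp_new
    · exact congrArg Subtype.val (hf_inj huv)
  · intro v
    by_cases hv : v = x <;> simp only [hv, dite_true, dite_false, hp_norm, hf_norm]
  · intro u v huv
    by_cases hu : u = x <;> by_cases hv : v = x <;> simp only [hu, hv, dite_true, dite_false]
    · exact absurd huv (hu ▸ hv ▸ G.irrefl)
    · exact hx_adj ⟨v, hv⟩ (hu ▸ huv)
    · exact (dist_comm _ _).trans (hx_adj ⟨u, hu⟩ (hv ▸ huv.symm))
    · exact hf_adj ⟨u, hu⟩ ⟨v, hv⟩ huv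

theorem stmt_12 {V : Type*} [Fintype V] (d : ℕ) (hd : 2 ≤ d)
    (G : SimpleGraph V) [DecidableRel G.Adj] (x : V) (hx : G.degree x ≤ d - 2)
    (h : SphereRealizable (G.induce {v : V | v ≠ x}) d) :
    SphereRealizable G d := by
  classical
  obtain ⟨f, hf_inj, hf_norm, hf_adj⟩ := h
  set N := Finset.univ.filter fun v : {v : V | v ≠ x} => G.Adj x v
  set K := (span ℝ ((N.image f : Finset _) : Set (EuclideanSpace ℝ (Fin d))))ᗮ
  have hN : N.card ≤ G.degree x := by
    rw [← G.card_neighborFinset_eq_degree]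
    exact Finset.card_le_card_of_injOn Subtype.val (fun v hv => by simpa [N] using hv)
      Subtype.val_injective.injOn
  have hK : 1 < finrank ℝ K := by
    have := finrank_le_card_add_finrank_orthogonal_span (N.image f)
    change _ ≤ _ + finrank ℝ K at this
    rw [finrank_euclideanSpace_fin] at this
    have := N.card_image_le (f := f)
    omega
  obtain ⟨p, ⟨hpK, hp_norm⟩, hp_new⟩ :=
    ((K.infinite_setOf_mem_norm_eq hK (r := 1 / √2) (by positivity)).sdiff
      (Set.finite_range f)).nonempty
  refine SphereRealizable.of_induce_ne f hf_inj hf_norm hf_adj hp_norm hp_new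
    fun v hv => inner_left_of_mem_orthogonal (subset_span ?_) hpK
  exact Finset.mem_coe.2 (Finset.mem_image_of_mem f (by simpa [N] using hv))
end

section
/- Let d ≥ 2 and let G be a finite simple graph that is (d−2)-degenerate, i.e. every nonempty induced subgraph of G has a vertex of degree at most d − 2 in that subgraph. Then G is realizable on the sphere 𝕊^{d−1} of radius 1/√2 in ℝ^d. -/
/-!
Two vectors of norm `1/√2` are at distance `1` exactly when they are orthogonal, so it suffices
to find an injective orthogonal representation of `G` by vectors of norm `1/√2`. Build it greedily
along a degeneracy order: remove a vertex `v` of degree at most `d - 2`, represent the rest, and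
send `v` into the orthogonal complement of the images of its neighbours. That complement has
dimension at least `2`, so its sphere is infinite and contains a point not used yet.
-/

open Metric Module Finset RealInnerProductSpace

theorem Metric.sphere_infinite {E : Type*} [NormedAddCommGroup E] [NormedSpace ℝ E]
    (h : 1 < Module.rank ℝ E) (x : E) {r : ℝ} (hr : 0 < r) : (sphere x r).Infinite := by
  have : Nontrivial E := (rank_pos_iff_nontrivial (R := ℝ)).1 (zero_lt_one.trans h)
  obtain ⟨y, hy⟩ := (NormedSpace.sphere_nonempty (x := (0 : E))).2 hr.le
  have hy0 : y ≠ 0 := ne_zero_of_mem_sphere hr.ne' ⟨y, hy⟩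
  refine (isConnected_sphere h x hr.le).isPreconnected.infinite_of_nontrivial
    ⟨x + y, ?_, x - y, ?_, ?_⟩
  · simpa using hy
  · simpa using hy
  · simpa [sub_eq_add_neg, eq_neg_iff_add_eq_zero, ← two_smul ℝ] using hy0

theorem Submodule.exists_mem_sphere_notMem {E : Type*} [NormedAddCommGroup E] [NormedSpace ℝ E]
    (W : Submodule ℝ E) (hW : 2 ≤ finrank ℝ W) {r : ℝ} (hr : 0 < r) {T : Set E}
    (hT : T.Finite) : ∃ x ∈ W, ‖x‖ = r ∧ x ∉ T := by
  have hinf : (((↑) : W → E) '' sphere 0 r).Infinite :=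
    (sphere_infinite (one_lt_rank_of_one_lt_finrank hW) 0 hr).image Subtype.val_injective.injOn
  obtain ⟨_, ⟨x, hx, rfl⟩, hxT⟩ := hinf.exists_notMem_finite hT
  exact ⟨x, x.2, by simpa using hx, hxT⟩

theorem dist_eq_one_of_inner_eq_zero_s13 {E : Type*} [NormedAddCommGroup E] [InnerProductSpace ℝ E]
    {x y : E} (hx : ‖x‖ = 1 / √2) (hy : ‖y‖ = 1 / √2) (h : ⟪x, y⟫ = 0) : dist x y = 1 := by
  have hsq : ‖x - y‖ * ‖x - y‖ = 1 := by
    rw [norm_sub_sq_eq_norm_sq_add_norm_sq_real h, hx, hy]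
    field_simp
    norm_num
  rw [dist_eq_norm]
  nlinarith [norm_nonneg (x - y)]

section

variable {V E : Type*} [NormedAddCommGroup E] [InnerProductSpace ℝ E]

structure SimpleGraph.IsOrthogonalRepOn (G : SimpleGraph V) (r : ℝ) (s : Finset V) (f : V → E) :
    Prop where
  injOn : Set.InjOn f s
  norm_eq : ∀ v ∈ s, ‖f v‖ = r
  inner_eq_zero : ∀ u ∈ s, ∀ w ∈ s, G.Adj u w → ⟪f u, f w⟫ = 0

namespace SimpleGraph.IsOrthogonalRepOn

variable [DecidableEq V] [FiniteDimensional ℝ E] {G : SimpleGraph V} {r : ℝ} {s : Finset V}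
  {f : V → E}

theorem exists_update_insert (hf : G.IsOrthogonalRepOn r s f) (hr : 0 < r) {v : V} (hv : v ∉ s)
    (N : Finset V) (hN : ∀ w ∈ s, G.Adj v w → w ∈ N) (hcard : #N + 2 ≤ finrank ℝ E) :
    ∃ x, G.IsOrthogonalRepOn r (insert v s) (Function.update f v x) := by
  set K := Submodule.span ℝ (Set.range fun w : N => f w)
  have hK : finrank ℝ K ≤ #N :=
    (finrank_range_le_card (R := ℝ) fun w : N => f w).trans_eq (Fintype.card_coe N)
  have hKperp : 2 ≤ finrank ℝ Kᗮ := by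
    have := K.finrank_add_finrank_orthogonal
    omega
  obtain ⟨x, hxK, hxr, hxs⟩ := Kᗮ.exists_mem_sphere_notMem hKperp hr (s.finite_toSet.image f)
  have hupd : Set.EqOn (Function.update f v x) f s := fun w hw =>
    Function.update_of_ne (ne_of_mem_of_not_mem hw hv) _ _
  have hperp : ∀ w ∈ s, G.Adj v w → ⟪f w, x⟫ = 0 := fun w hw hvw =>
    Submodule.inner_right_of_mem_orthogonal
      (Submodule.subset_span (Set.mem_range_self (⟨w, hN w hw hvw⟩ : N))) hxK
  refine ⟨x, ?_, ?_, ?_⟩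
  · rw [coe_insert, Set.injOn_insert (by simpa using hv), Function.update_self, hupd.image_eq]
    exact ⟨hf.injOn.congr hupd.symm, hxs⟩
  · simp only [forall_mem_insert, Function.update_self]
    exact ⟨hxr, fun w hw => hupd hw ▸ hf.norm_eq w hw⟩
  · intro u hu w hw huw
    rw [mem_insert] at hu hw
    rcases hu with rfl | hu <;> rcases hw with rfl | hw
    · exact absurd huw G.irrefl
    · rw [Function.update_self, hupd hw, real_inner_comm]
      exact hperp w hw huw
    · rw [Function.update_self, hupd hu]
      exact hperp u hu huw.symm
    · rw [hupd hu, hupd hw]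
      exact hf.inner_eq_zero u hu w hw huw

end SimpleGraph.IsOrthogonalRepOn

theorem SimpleGraph.exists_isOrthogonalRepOn [DecidableEq V] [FiniteDimensional ℝ E]
    (G : SimpleGraph V) [DecidableRel G.Adj] {r : ℝ} (hr : 0 < r)
    (hdegen : ∀ s : Finset V, s.Nonempty → ∃ v ∈ s, #{w ∈ s | G.Adj v w} + 2 ≤ finrank ℝ E)
    (s : Finset V) : ∃ f : V → E, G.IsOrthogonalRepOn r s f := by
  induction s using Finset.strongInduction with
  | H s ih =>
    obtain rfl | hs := s.eq_empty_or_nonempty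
    · exact ⟨0, by simp, by simp, by simp⟩
    obtain ⟨v, hvs, hdeg⟩ := hdegen s hs
    obtain ⟨f, hf⟩ := ih (s.erase v) (erase_ssubset hvs)
    obtain ⟨x, hx⟩ := hf.exists_update_insert hr (notMem_erase v s) _
      (fun w hw hvw => mem_filter.2 ⟨mem_of_mem_erase hw, hvw⟩) hdeg
    exact ⟨_, insert_erase hvs ▸ hx⟩

end

theorem stmt_13 {V : Type*} [Fintype V] [DecidableEq V] (d : ℕ) (hd : 2 ≤ d)
    (G : SimpleGraph V) [DecidableRel G.Adj]
    -- `G` is `(d−2)`-degenerate: every nonempty (induced) subgraph has a vertex of degree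
    -- at most `d − 2` within it
    (hdegen : ∀ s : Finset V, s.Nonempty →
      ∃ v ∈ s, ((G.neighborFinset v).filter (· ∈ s)).card ≤ d - 2) :
    SphereRealizable G d := by
  have hdegen' (s : Finset V) (hs : s.Nonempty) :
      ∃ v ∈ s, #{w ∈ s | G.Adj v w} + 2 ≤ finrank ℝ (EuclideanSpace ℝ (Fin d)) := by
    obtain ⟨v, hvs, hv⟩ := hdegen s hs
    have hcard : #{w ∈ s | G.Adj v w} = #{w ∈ G.neighborFinset v | w ∈ s} := by
      congr 1; ext; simp [and_comm]
    exact ⟨v, hvs, by rw [finrank_euclideanSpace_fin]; omega⟩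
  obtain ⟨f, hf⟩ := G.exists_isOrthogonalRepOn (r := 1 / √2) (by positivity) hdegen' univ
  refine ⟨f, fun u w huw => hf.injOn (mem_univ u) (mem_univ w) huw,
    fun v => hf.norm_eq v (mem_univ v), fun u w huw => ?_⟩
  exact dist_eq_one_of_inner_eq_zero_s13 (hf.norm_eq u (mem_univ u)) (hf.norm_eq w (mem_univ w))
    (hf.inner_eq_zero u (mem_univ u) w (mem_univ w) huw)
end

section
/- Let d ≥ 1 and k ≥ 0, and let H be a finite simple graph on d + k vertices. If there exist k pairwise disjoint pairs of vertices of H, each pair non-adjacent in H (i.e. the complement of H has a matching of size k), then H is realizable on the sphere 𝕊^{d−1} of radius 1/√2 in ℝ^d. -/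
open Function

/-- `(i, b)` stands for the vertex `±eᵢ` of the cross-polytope; it is adjacent to every vertex
except its antipode. -/
def crossPolytopeGraph (ι : Type*) : SimpleGraph (ι × Bool) :=
  (⊤ : SimpleGraph ι).comap Prod.fst

@[simp]
theorem crossPolytopeGraph_adj {ι : Type*} {x y : ι × Bool} :
    (crossPolytopeGraph ι).Adj x y ↔ x.1 ≠ y.1 := by
  simp [crossPolytopeGraph]

def SimpleGraph.Embedding.crossPolytopeGraph {ι κ : Type*} (g : ι ↪ κ) :
    _root_.crossPolytopeGraph ι ↪g _root_.crossPolytopeGraph κ where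
  toEmbedding := g.prodMap (Function.Embedding.refl Bool)
  map_rel_iff' := by simp [g.injective.eq_iff]

theorem SphereRealizable.of_injective_hom {V W : Type*} {G : SimpleGraph V} {G' : SimpleGraph W}
    {d : ℕ} (h : SphereRealizable G' d) (φ : G →g G') (hφ : Injective φ) :
    SphereRealizable G d := by
  obtain ⟨f, hf, hnorm, hdist⟩ := h
  exact ⟨f ∘ φ, hf.comp hφ, fun v => hnorm (φ v), fun u v huv => hdist _ _ (φ.map_adj huv)⟩

theorem EuclideanSpace.dist_single_single_of_ne {ι : Type*} [Fintype ι] [DecidableEq ι] {i j : ι}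
    (hij : i ≠ j) (x y : ℝ) :
    dist (EuclideanSpace.single i x) (EuclideanSpace.single j y) = √(x ^ 2 + y ^ 2) := by
  rw [dist_eq_norm, ← Real.sqrt_sq (norm_nonneg _), norm_sub_sq_real,
    EuclideanSpace.inner_single_left]
  simp [hij]

theorem sphereRealizable_crossPolytopeGraph (d : ℕ) :
    SphereRealizable (crossPolytopeGraph (Fin d)) d := by
  set r : ℝ := 1 / √2 with hr
  have hr_pos : 0 < r := by positivity
  have hr_sq : r ^ 2 + r ^ 2 = 1 := by
    rw [hr, div_pow, Real.sq_sqrt zero_le_two]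
    norm_num
  refine ⟨fun x => EuclideanSpace.single x.1 (if x.2 then r else -r), ?_, ?_, ?_⟩
  · rintro ⟨i, b⟩ ⟨j, c⟩ h
    have hi := congrFun (congrArg WithLp.ofLp h) i
    by_cases hij : i = j
    · subst hij
      cases b <;> cases c <;> simp at hi ⊢ <;> linarith
    · cases b <;> simp [hij] at hi <;> linarith
  · intro x
    simp [apply_ite, hr]
  · rintro ⟨i, b⟩ ⟨j, c⟩ hij
    rw [EuclideanSpace.dist_single_single_of_ne hij]
    cases b <;> cases c <;> simp [hr_sq]

theorem exists_injective_hom_crossPolytopeGraph {ι V : Type*} {H : SimpleGraph V}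
    (m : ι ⊕ ι ↪ V) (hm : ∀ i, ¬H.Adj (m (.inl i)) (m (.inr i))) :
    ∃ φ : H →g crossPolytopeGraph (ι ⊕ ↥(Set.range m)ᶜ), Injective φ := by
  classical
  let e : (ι ⊕ ι) ⊕ ↥(Set.range m)ᶜ ≃ V :=
    ((Equiv.ofInjective m m.injective).sumCongr (Equiv.refl _)).trans (Equiv.Set.sumCompl _)
  have he_inl : ∀ x, e (.inl x) = m x := fun _ => rfl
  have he_inr : ∀ r, e (.inr r) = r := fun _ => rfl
  let fold : (ι ⊕ ι) ⊕ ↥(Set.range m)ᶜ → (ι ⊕ ↥(Set.range m)ᶜ) × Bool :=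
    Sum.elim (Sum.elim (fun i => (.inl i, true)) (fun i => (.inl i, false)))
      (fun r => (.inr r, true))
  have hfold : Injective fold := by
    rintro ((i | i) | r) ((j | j) | s) h <;> simp_all [fold]
  refine ⟨⟨fold ∘ e.symm, ?_⟩, hfold.comp e.symm.injective⟩
  intro u v huv
  obtain ⟨s, rfl⟩ := e.surjective u
  obtain ⟨t, rfl⟩ := e.surjective v
  simp only [comp_apply, Equiv.symm_apply_apply, crossPolytopeGraph_adj]
  rcases s with ((i | i) | r) <;> rcases t with ((j | j) | r') <;>
    simp only [he_inl, he_inr] at huv <;>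
    simp only [fold, Sum.elim_inl, Sum.elim_inr, ne_eq, Sum.inl.injEq, Sum.inr.injEq,
      reduceCtorEq, not_false_eq_true] <;>
    rintro rfl
  exacts [huv.ne rfl, hm i huv, hm i huv.symm, huv.ne rfl, huv.ne rfl]

theorem stmt_14_general {V : Type*} [Fintype V] (d k : ℕ)
    (H : SimpleGraph V) (hcard : Fintype.card V = d + k)
    -- the complement of `H` has a matching of size `k`: there are `k` pairwise disjoint
    -- pairs of vertices `(a i, b i)`, each pair non-adjacent in `H`
    (hmatching : ∃ a b : Fin k → V,
      Function.Injective (Sum.elim a b : Fin k ⊕ Fin k → V) ∧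
      ∀ i : Fin k, ¬ H.Adj (a i) (b i)) :
    SphereRealizable H d := by
  classical
  obtain ⟨a, b, hinj, hnadj⟩ := hmatching
  obtain ⟨φ, hφ⟩ := exists_injective_hom_crossPolytopeGraph ⟨_, hinj⟩ hnadj
  have hcard_axes :
      Fintype.card (Fin k ⊕ ↥(Set.range (Sum.elim a b))ᶜ) ≤ Fintype.card (Fin d) := by
    have h2k := Fintype.card_le_of_injective _ hinj
    rw [Fintype.card_sum, Fintype.card_compl_set, Set.card_range_of_injective hinj]
    simp only [Fintype.card_sum, Fintype.card_fin] at h2k ⊢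
    omega
  obtain ⟨g⟩ := Function.Embedding.nonempty_of_card_le hcard_axes
  let ψ := SimpleGraph.Embedding.crossPolytopeGraph g
  exact (sphereRealizable_crossPolytopeGraph d).of_injective_hom (ψ.toHom.comp φ)
    (ψ.injective.comp hφ)

theorem stmt_14 {V : Type*} [Fintype V] (d k : ℕ) (hd : 1 ≤ d)
    (H : SimpleGraph V) (hcard : Fintype.card V = d + k)
    -- the complement of `H` has a matching of size `k`: there are `k` pairwise disjoint
    -- pairs of vertices `(a i, b i)`, each pair non-adjacent in `H`
    (hmatching : ∃ a b : Fin k → V,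
      Function.Injective (Sum.elim a b : Fin k ⊕ Fin k → V) ∧
      ∀ i : Fin k, ¬ H.Adj (a i) (b i)) :
    SphereRealizable H d :=
  stmt_14_general d k H hcard hmatching
end

section
/- For every d ≥ 1, the graph K_{d+2} − K_3, obtained from the complete graph on d + 2 vertices by deleting the three edges of one triangle, is not realizable on the sphere 𝕊^{d−1} of radius 1/√2 in ℝ^d. -/
/-- `K_n − K_3`: the complete graph on `Fin n` with the three edges among the vertices
`0, 1, 2` deleted, i.e. two distinct vertices are adjacent unless both lie in `{0, 1, 2}`. -/
def KminusK3 (n : ℕ) : SimpleGraph (Fin n) where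
  Adj u v := u ≠ v ∧ (3 ≤ u.val ∨ 3 ≤ v.val)
  symm := ⟨fun u v h => ⟨h.1.symm, h.2.symm⟩⟩
  loopless := ⟨fun u h => h.1 rfl⟩

open scoped RealInnerProductSpace
open Module Submodule Set

section InnerProductSpace

variable {E : Type*} [NormedAddCommGroup E] [InnerProductSpace ℝ E]

lemma real_inner_eq_zero_of_dist_eq_one {x y : E} (hx : ‖x‖ = 1 / √2) (hy : ‖y‖ = 1 / √2)
    (h : dist x y = 1) : ⟪x, y⟫ = 0 := by
  rw [← norm_sub_sq_eq_norm_sq_add_norm_sq_iff_real_inner_eq_zero, ← dist_eq_norm, h, hx, hy,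
    one_div_mul_one_div, Real.mul_self_sqrt zero_le_two]
  norm_num

lemma mem_orthogonal_span_range_iff {ι : Type*} {u : ι → E} {v : E} :
    v ∈ (span ℝ (range u))ᗮ ↔ ∀ i, ⟪u i, v⟫ = 0 := by
  refine ⟨fun h i => inner_right_of_mem_orthogonal (subset_span (mem_range_self i)) h,
    fun h => (mem_orthogonal _ _).2 fun w hw => ?_⟩
  have hspan : span ℝ (range u) ≤ (ℝ ∙ v)ᗮ :=
    span_le.2 (range_subset_iff.2 fun i => mem_orthogonal_singleton_iff_inner_left.2 (h i))
  exact mem_orthogonal_singleton_iff_inner_left.1 (hspan hw)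

lemma finrank_orthogonal_span_range_le_one [FiniteDimensional ℝ E] {ι : Type*} [Fintype ι]
    {u : ι → E} (hu₀ : ∀ i, u i ≠ 0) (hu : Pairwise fun i j => ⟪u i, u j⟫ = 0)
    (hE : finrank ℝ E ≤ Fintype.card ι + 1) : finrank ℝ (span ℝ (range u))ᗮ ≤ 1 := by
  have := (span ℝ (range u)).finrank_add_finrank_orthogonal
  rw [finrank_span_eq_card (linearIndependent_of_ne_zero_of_inner_eq_zero hu₀ hu)] at this
  omega

end InnerProductSpace

section NormedSpace

variable {E : Type*} [NormedAddCommGroup E] [NormedSpace ℝ E] [FiniteDimensional ℝ E]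

lemma eq_or_eq_neg_of_norm_eq_of_finrank_le_one (hE : finrank ℝ E ≤ 1) {x y : E}
    (h : ‖x‖ = ‖y‖) : x = y ∨ x = -y := by
  obtain ⟨w, hw⟩ := finrank_le_one_iff.mp hE
  obtain ⟨a, rfl⟩ := hw x
  obtain ⟨b, rfl⟩ := hw y
  rcases eq_or_ne w 0 with rfl | hw₀
  · simp
  rw [norm_smul, norm_smul] at h
  rcases abs_eq_abs.mp (mul_right_cancel₀ (norm_ne_zero_iff.mpr hw₀) h) with rfl | rfl
  · exact .inl rfl
  · exact .inr (neg_smul b w)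

lemma not_injective_of_norm_eq_of_finrank_le_one (hE : finrank ℝ E ≤ 1) {x : Fin 3 → E} {r : ℝ}
    (hx : ∀ i, ‖x i‖ = r) : ¬ Function.Injective x := by
  intro hinj
  have h (i j : Fin 3) (hij : i ≠ j) : x i = -x j :=
    (eq_or_eq_neg_of_norm_eq_of_finrank_le_one hE ((hx i).trans (hx j).symm)).resolve_left
      (hinj.ne hij)
  exact hinj.ne (by decide : (1 : Fin 3) ≠ 2)
    (neg_injective ((h 0 1 (by decide)).symm.trans (h 0 2 (by decide))))

end NormedSpace

theorem stmt_18 (d : ℕ) (hd : 1 ≤ d) :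
    ¬ SphereRealizable (KminusK3 (d + 2)) d := by
  obtain ⟨n, rfl⟩ := Nat.exists_eq_add_of_le' hd
  rintro ⟨f, hinj, hnorm, hdist⟩
  have horth (v w : Fin (n + 3)) (h : (KminusK3 (n + 3)).Adj v w) : ⟪f v, f w⟫ = 0 :=
    real_inner_eq_zero_of_dist_eq_one (hnorm v) (hnorm w) (hdist v w h)
  have hadj (i : Fin n) (v : Fin (n + 3)) (h : i.addNat 3 ≠ v) :
      (KminusK3 (n + 3)).Adj (i.addNat 3) v :=
    ⟨h, .inl (Nat.le_add_left 3 i)⟩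
  set u : Fin n → EuclideanSpace ℝ (Fin (n + 1)) := fun i => f (i.addNat 3)
  have hK : finrank ℝ (span ℝ (range u))ᗮ ≤ 1 :=
    finrank_orthogonal_span_range_le_one
      (fun i => norm_ne_zero_iff.mp (by rw [hnorm]; positivity))
      (fun i j hij => horth _ _ (hadj i _ (mt (Fin.addNat_inj 3).mp hij)))
      (by simp)
  have hmem (i : Fin 3) : f (i.castLE (by omega)) ∈ (span ℝ (range u))ᗮ :=
    mem_orthogonal_span_range_iff.2 fun j =>
      horth _ _ (hadj j _ (Fin.ne_of_val_ne (by
        simp only [Fin.val_addNat, Fin.val_castLE]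
        omega)))
  exact not_injective_of_norm_eq_of_finrank_le_one hK (x := fun i => ⟨_, hmem i⟩)
    (fun i => hnorm _) fun i j h => Fin.castLE_injective _ (hinj (congrArg Subtype.val h))
end

section
/- The complete bipartite graph K_{3,3} is not realizable in ℝ^3; that is, there is no injective map f from the six vertices of K_{3,3} to EuclideanSpace ℝ (Fin 3) such that dist (f u) (f v) = 1 for every edge uv of K_{3,3}. -/
/-!
If every point of `s` is at the same distance from every point of `t`, then each difference of two
points of `s` is orthogonal to each difference of two points of `t` (both lie in perpendicular
bisectors), so `dim (vectorSpan s) + dim (vectorSpan t) ≤ dim V`. Three distinct points on a sphere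
are affinely independent, so each side of a unit-distance copy of `K_{3,3}` spans a plane, and two
mutually orthogonal planes do not fit into `ℝ³`.
-/

open Module EuclideanGeometry

open scoped RealInnerProductSpace

variable {V P : Type*} [NormedAddCommGroup V] [InnerProductSpace ℝ V] [MetricSpace P]
  [NormedAddTorsor V P]

theorem vectorSpan_le_orthogonal_vectorSpan_of_dist_eq {s t : Set P} {r : ℝ}
    (h : ∀ p ∈ s, ∀ q ∈ t, dist p q = r) : vectorSpan ℝ s ≤ (vectorSpan ℝ t)ᗮ := by
  refine Submodule.isOrtho_span.2 ?_
  rintro _ ⟨p₁, hp₁, p₂, hp₂, rfl⟩ _ ⟨q₁, hq₁, q₂, hq₂, rfl⟩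
  refine inner_vsub_vsub_of_dist_eq_of_dist_eq ?_ ?_ <;>
    rw [dist_comm, h _ ‹_› _ ‹_›, dist_comm, h _ ‹_› _ ‹_›]

theorem finrank_vectorSpan_add_finrank_vectorSpan_le_of_dist_eq [FiniteDimensional ℝ V]
    {s t : Set P} {r : ℝ} (h : ∀ p ∈ s, ∀ q ∈ t, dist p q = r) :
    finrank ℝ (vectorSpan ℝ s) + finrank ℝ (vectorSpan ℝ t) ≤ finrank ℝ V := by
  calc finrank ℝ (vectorSpan ℝ s) + finrank ℝ (vectorSpan ℝ t)
      ≤ finrank ℝ (vectorSpan ℝ t)ᗮ + finrank ℝ (vectorSpan ℝ t) := by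
        gcongr
        exact Submodule.finrank_mono (vectorSpan_le_orthogonal_vectorSpan_of_dist_eq h)
    _ = finrank ℝ V := by rw [add_comm, Submodule.finrank_add_finrank_orthogonal]

theorem finrank_vectorSpan_eq_two_of_dist_eq {p : Fin 3 → P} (hp : Function.Injective p)
    {c : P} {r : ℝ} (h : ∀ i, dist (p i) c = r) : finrank ℝ (vectorSpan ℝ (Set.range p)) = 2 :=
  (Cospherical.affineIndependent ⟨c, r, by simpa using h⟩ subset_rfl hp).finrank_vectorSpan
    (by simp)

theorem stmt_19 :
    ¬ ∃ f : (Fin 3 ⊕ Fin 3) → EuclideanSpace ℝ (Fin 3),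
      Function.Injective f ∧
      ∀ u v : Fin 3 ⊕ Fin 3, (completeBipartiteGraph (Fin 3) (Fin 3)).Adj u v →
        dist (f u) (f v) = 1 := by
  rintro ⟨f, hf, hdist⟩
  have hunit : ∀ i j, dist (f (.inl i)) (f (.inr j)) = 1 := fun i j => hdist _ _ (by simp)
  have hleft := finrank_vectorSpan_eq_two_of_dist_eq (hf.comp Sum.inl_injective)
    fun i => hunit i 0
  have hright := finrank_vectorSpan_eq_two_of_dist_eq (hf.comp Sum.inr_injective)
    fun j => (dist_comm _ _).trans (hunit 0 j)
  have hsum := finrank_vectorSpan_add_finrank_vectorSpan_le_of_dist_eq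
    (s := Set.range (f ∘ Sum.inl)) (t := Set.range (f ∘ Sum.inr)) (r := 1)
    (by rintro _ ⟨i, rfl⟩ _ ⟨j, rfl⟩; exact hunit i j)
  rw [hleft, hright, finrank_euclideanSpace_fin] at hsum
  omega
end
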